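/- Let x and x' be μ-permissible extended alcoves for GSp_{2g}. Extend the invariants by setting r_{2g,j} := r_{0,j}. If r_{ij}(x) = r_{ij}(x') for all i ∈ {g, g+1, …, 2g} and all j ∈ {0, …, 2g−1} with i ≢ j (mod 2g), then x = x'. (That is, in the symplectic case the r_{ij} for g ≤ i ≤ 2g, 0 ≤ j ≤ 2g−1, i ≠ j determine the alcove uniquely.) -/

import Mathlib

open Finset

/-- Elements of `ℤⁿ`; the coordinate `v(j)` for `1 ≤ j ≤ n` is `v ⟨j-1, _⟩`. -/
abbrev Vec (n : ℕ) := Fin n → ℤ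

/-- The extension of a tuple `(x_0, …, x_{n-1})` by `x_n := x_0 - (1,…,1)`. -/
def xext (n : ℕ) [NeZero n] (x : Fin n → Vec n) (m : ℕ) : Vec n :=
  if h : m < n then x ⟨m, h⟩ else fun j => x ⟨0, Nat.pos_of_ne_zero (NeZero.ne n)⟩ j - 1

/-- An extended alcove for `GL_n`: setting `x_n := x_0 - (1,…,1)`, for each
`i ∈ {0,…,n-1}` there is exactly one coordinate `j` with `x_{i+1}(j) = x_i(j) - 1`,
and `x_{i+1}(j') = x_i(j')` for all other coordinates `j'`. -/
def IsExtendedAlcove (n : ℕ) [NeZero n] (x : Fin n → Vec n) : Prop :=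
  ∀ i : Fin n, ∃! j : Fin n,
    xext n x ((i : ℕ) + 1) j = xext n x (i : ℕ) j - 1 ∧
      ∀ j' : Fin n, j' ≠ j → xext n x ((i : ℕ) + 1) j' = xext n x (i : ℕ) j'

/-- The standard alcove `ω`: `ω_i(j) = -1` for `j ≤ i` and `ω_i(j) = 0` for `j > i`
(coordinates `j ∈ {1,…,n}`). -/
def stdAlc (n : ℕ) (i : ℕ) : Vec n := fun j => if (j : ℕ) + 1 ≤ i then -1 else 0

/-- `μ`-permissibility for `μ = (1^{(r)}, 0^{(n-r)})`:
`ω_i ≤ x_i ≤ ω_i + (1,…,1)` componentwise, and `Σ_j x_i(j) = n - r - i`. -/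
def IsMuPermissible (n : ℕ) (r : ℕ) (x : Fin n → Vec n) : Prop :=
  ∀ i : Fin n,
    (∀ j, stdAlc n (i : ℕ) j ≤ x i j ∧ x i j ≤ stdAlc n (i : ℕ) j + 1) ∧
    (∑ j, x i j) = (n : ℤ) - (r : ℤ) - ((i : ℕ) : ℤ)

/-- The cyclic interval `(j, i] = {j+1, j+2, …, i} ⊆ ℤ/nℤ`; it is all of `ℤ/nℤ` when `i = j`. -/
def cycInt (n : ℕ) [NeZero n] (j i : ZMod n) : Finset (ZMod n) :=
  (Finset.Icc 1 (if i = j then n else (i - j).val)).image fun m : ℕ => j + (m : ZMod n)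

/-- The `Fin n`-index of the coordinate `∈ {1,…,n}` representing the residue `k ∈ ℤ/nℤ`. -/
def toIdx (n : ℕ) [NeZero n] (k : ZMod n) : Fin n := ⟨(k - 1).val, ZMod.val_lt _⟩

/-- The invariant `r_{ij}(x) = Σ_{k ∈ (j,i]} (ω_i(k) - x_i(k) + 1)` for residues
`i, j ∈ ℤ/nℤ`, the subscript `i` being taken via its representative in `{0,…,n-1}`. -/
def rInv (n : ℕ) [NeZero n] (x : Fin n → Vec n) (i j : ZMod n) : ℤ :=
  ∑ k ∈ cycInt n j i,
    (stdAlc n i.val (toIdx n k) - x ⟨i.val, ZMod.val_lt i⟩ (toIdx n k) + 1)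

/-- The duality condition defining extended alcoves for `GSp_n` (`n = 2g`):
`x_i(j) + x_{n-i}(n-j+1) = c - 1` for all `0 ≤ i ≤ n` and coordinates `j ∈ {1,…,n}`,
where `x_n := x_0 - (1,…,1)`.  (An extended alcove for `GSp_{2g}` is an extended
alcove for `GL_{2g}` satisfying this condition for some constant `c = c(x)`.) -/
def IsSympDual (n : ℕ) [NeZero n] (x : Fin n → Vec n) (c : ℤ) : Prop :=
  ∀ i : ℕ, i ≤ n → ∀ j : Fin n, xext n x i j + xext n x (n - i) j.rev = c - 1

/-!
For a fixed row `i`, the invariants telescope: `r_{i,k-1} - r_{i,k} = ω_i(k) - x_i(k) + 1`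
for `k ≠ i`, while `r_{i,i-1}` is the single term `k = i`. Hence the row `x_i` is determined
by the `r_{i,j}` with `j ≠ i` together with `r_{i,i}`, and permissibility fixes the latter through
`Σ_j x_i(j) = g - i`. This recovers the rows `x_i` with `g ≤ i < 2g` and, since `r_{2g,j} = r_{0,j}`,
the row `x_0`. The duality `x_i(j) + x_{2g-i}(2g+1-j) = c - 1` at `i = 0` then recovers `c` from `x_0`,
and for `0 < i < g` it recovers `x_i` from `x_{2g-i}`.
-/

namespace ZMod

variable {n : ℕ} [NeZero n]

theorem val_sub_one_add_one (z : ZMod n) : (z - 1).val + 1 = if z = 0 then n else z.val := by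
  have hcast : (((z - 1).val + 1 : ℕ) : ZMod n) = z := by
    push_cast [natCast_zmod_val]
    ring
  have hle : (z - 1).val + 1 ≤ n := (z - 1).val_lt
  split_ifs with hz
  · subst hz
    rw [natCast_eq_zero_iff] at hcast
    exact le_antisymm hle (Nat.le_of_dvd (Nat.succ_pos _) hcast)
  · rcases hle.lt_or_eq with hlt | heq
    · conv_rhs => rw [← hcast, val_natCast_of_lt hlt]
    · exact absurd (by rw [← hcast, heq, natCast_self]) hz

end ZMod

section CyclicInterval

variable {n : ℕ} [NeZero n]

theorem mem_cycInt {i j k : ZMod n} :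
    k ∈ cycInt n j i ↔ (k - (j + 1)).val ≤ (i - (j + 1)).val := by
  have hlen : (if i = j then n else (i - j).val) = (i - (j + 1)).val + 1 := by
    rw [show i - (j + 1) = i - j - 1 by ring, ZMod.val_sub_one_add_one]
    simp only [sub_eq_zero]
  simp only [cycInt, hlen, mem_image, mem_Icc]
  constructor
  · rintro ⟨m, ⟨hm1, hmle⟩, rfl⟩
    have hm : j + (m : ZMod n) - (j + 1) = ((m - 1 : ℕ) : ZMod n) := by
      push_cast [Nat.cast_sub hm1]
      ring
    have hi := (i - (j + 1)).val_lt
    rw [hm, ZMod.val_natCast_of_lt (by omega)]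
    omega
  · intro hk
    refine ⟨(k - (j + 1)).val + 1, ⟨by omega, by omega⟩, ?_⟩
    push_cast [ZMod.natCast_zmod_val]
    ring

theorem cycInt_self (i : ZMod n) : cycInt n i i = univ := by
  ext k
  have hmax := ZMod.val_sub_one_add_one (0 : ZMod n)
  rw [if_pos rfl, zero_sub] at hmax
  have hk := (k - (i + 1)).val_lt
  simp only [mem_cycInt, mem_univ, iff_true, show i - (i + 1) = -1 by ring]
  omega

theorem cycInt_sub_one_self (i : ZMod n) : cycInt n (i - 1) i = {i} := by
  ext k
  simp [mem_cycInt, ZMod.val_eq_zero, sub_eq_zero]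

theorem cycInt_sub_one {i k : ZMod n} (hk : k ≠ i) :
    cycInt n (k - 1) i = insert k (cycInt n k i) := by
  have hik : i - k ≠ 0 := sub_ne_zero.2 hk.symm
  ext m
  have hm := ZMod.val_sub_one_add_one (m - k)
  have hi := ZMod.val_sub_one_add_one (i - k)
  rw [if_neg hik] at hi
  simp only [mem_insert, mem_cycInt, sub_add_cancel, ← sub_sub]
  by_cases hmk : m = k
  · simp [hmk]
  · rw [if_neg (sub_ne_zero.2 hmk)] at hm
    simp only [hmk, false_or]
    omega

theorem self_notMem_cycInt {i k : ZMod n} (hk : k ≠ i) : k ∉ cycInt n k i := by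
  have hik : i - k ≠ 0 := sub_ne_zero.2 hk.symm
  have hk' := ZMod.val_sub_one_add_one (k - k)
  have hi := ZMod.val_sub_one_add_one (i - k)
  rw [if_pos (sub_self k)] at hk'
  rw [if_neg hik] at hi
  have hlt := (i - k).val_lt
  simp only [mem_cycInt, ← sub_sub]
  omega

theorem sum_cycInt_sub_one {M : Type*} [AddCommMonoid M] (f : ZMod n → M) {i k : ZMod n}
    (hk : k ≠ i) : ∑ m ∈ cycInt n (k - 1) i, f m = f k + ∑ m ∈ cycInt n k i, f m := by
  rw [cycInt_sub_one hk, sum_insert (self_notMem_cycInt hk)]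

theorem eq_of_sum_cycInt_eq {M : Type*} [AddCommGroup M] {f f' : ZMod n → M} (i : ZMod n)
    (h : ∀ j, ∑ k ∈ cycInt n j i, f k = ∑ k ∈ cycInt n j i, f' k) : f = f' := by
  funext k
  by_cases hk : k = i
  · simpa [hk, cycInt_sub_one_self] using h (i - 1)
  · have hstep := h (k - 1)
    rw [sum_cycInt_sub_one f hk, sum_cycInt_sub_one f' hk, h k] at hstep
    exact add_right_cancel hstep

end CyclicInterval

def toIdxEquiv (n : ℕ) [NeZero n] : ZMod n ≃ Fin n where
  toFun := toIdx n
  invFun j := ((j : ℕ) : ZMod n) + 1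
  left_inv k := by simp [toIdx]
  right_inv j := Fin.ext <| by simp [toIdx, Nat.mod_eq_of_lt j.isLt]

section Invariants

variable {n : ℕ} [NeZero n]

theorem toIdx_natCast_add_one (j : Fin n) : toIdx n ((j : ℕ) + 1) = j :=
  (toIdxEquiv n).right_inv j

theorem sum_toIdx {M : Type*} [AddCommMonoid M] (f : Fin n → M) :
    ∑ k, f (toIdx n k) = ∑ j, f j :=
  (toIdxEquiv n).sum_comp f

theorem rInv_self_eq_of_sum_eq {x x' : Fin n → Vec n} {i : ZMod n}
    (hsum : ∑ j, x ⟨i.val, i.val_lt⟩ j = ∑ j, x' ⟨i.val, i.val_lt⟩ j) :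
    rInv n x i i = rInv n x' i i := by
  unfold rInv
  rw [cycInt_self]
  simp only [sum_add_distrib, sum_sub_distrib, sum_toIdx, hsum]

theorem row_eq_of_rInv_eq {x x' : Fin n → Vec n} {m : Fin n}
    (hsum : ∑ j, x m j = ∑ j, x' m j)
    (h : ∀ j : ZMod n, j ≠ (m : ℕ) → rInv n x (m : ℕ) j = rInv n x' (m : ℕ) j) :
    x m = x' m := by
  obtain ⟨i, rfl⟩ : ∃ i : ZMod n, (⟨i.val, i.val_lt⟩ : Fin n) = m :=
    ⟨(m : ℕ), Fin.ext (ZMod.val_natCast_of_lt m.isLt)⟩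
  simp only [ZMod.natCast_zmod_val] at h
  have hterms := eq_of_sum_cycInt_eq i fun j => by
    by_cases hj : j = i
    · subst hj
      exact rInv_self_eq_of_sum_eq hsum
    · exact h j hj
  funext j
  have hj := congrFun hterms ((j : ℕ) + 1)
  simp only [toIdx_natCast_add_one] at hj
  linarith

end Invariants

section Duality

variable {n : ℕ} [NeZero n] {x : Fin n → Vec n} {c : ℤ}

theorem IsSympDual.eq_add_rev (hd : IsSympDual n x c) (j : Fin n) : c = x 0 j + x 0 j.rev := by
  have := hd 0 (Nat.zero_le n) j
  simp only [xext, Nat.pos_of_neZero n, ↓reduceDIte, Fin.mk_zero', tsub_zero, lt_self_iff_false] at this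
  linarith

theorem IsSympDual.apply_eq (hd : IsSympDual n x c) {i : Fin n} (hi : (i : ℕ) ≠ 0) (j : Fin n) :
    x i j = c - 1 - x ⟨n - i, by omega⟩ j.rev := by
  have := hd i i.isLt.le j
  simp only [xext, i.isLt, ↓reduceDIte, Fin.eta, show n - i < n by omega] at this
  linarith

end Duality

theorem sympAlcove_determined_by_partial_invariants_general
    (g : ℕ) [NeZero (2 * g)]
    (x x' : Fin (2 * g) → Vec (2 * g)) (c c' : ℤ)
    (hperm : IsMuPermissible (2 * g) g x)
    (hdual : IsSympDual (2 * g) x c)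
    (hperm' : IsMuPermissible (2 * g) g x')
    (hdual' : IsSympDual (2 * g) x' c')
    (h : ∀ i j : ℕ, g ≤ i → i ≤ 2 * g → j < 2 * g →
      (i : ZMod (2 * g)) ≠ (j : ZMod (2 * g)) →
      rInv (2 * g) x (i : ZMod (2 * g)) (j : ZMod (2 * g)) =
        rInv (2 * g) x' (i : ZMod (2 * g)) (j : ZMod (2 * g))) :
    x = x' := by
  have hrow : ∀ m : Fin (2 * g), ((m : ℕ) = 0 ∨ g ≤ m) → x m = x' m := by
    intro m hm
    obtain ⟨i, hgi, hi, him⟩ : ∃ i : ℕ, g ≤ i ∧ i ≤ 2 * g ∧ (i : ZMod (2 * g)) = (m : ℕ) := by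
      rcases hm with hm | hm
      · exact ⟨2 * g, by omega, le_rfl, by rw [hm, ZMod.natCast_self, Nat.cast_zero]⟩
      · exact ⟨m, hm, m.isLt.le, rfl⟩
    refine row_eq_of_rInv_eq ((hperm m).2.trans (hperm' m).2.symm) fun j hj => ?_
    rw [← him, ← ZMod.natCast_zmod_val j] at hj ⊢
    exact h i j.val hgi hi j.val_lt (Ne.symm hj)
  have hc : c = c' := by
    rw [hdual.eq_add_rev 0, hdual'.eq_add_rev 0, hrow 0 (Or.inl rfl)]
  funext m
  by_cases hm : (m : ℕ) = 0 ∨ g ≤ m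
  · exact hrow m hm
  · push Not at hm
    funext j
    rw [hdual.apply_eq hm.1, hdual'.apply_eq hm.1, hc, hrow _ (Or.inr (by dsimp only; omega))]

/-- A `μ`-permissible extended alcove for `GSp_{2g}` is uniquely determined by its
invariants `r_{ij}` for `g ≤ i ≤ 2g`, `0 ≤ j ≤ 2g-1`, `i ≢ j (mod 2g)`
(with the convention `r_{2g,j} = r_{0,j}`, which holds automatically for residues). -/
theorem sympAlcove_determined_by_partial_invariants
    (g : ℕ) (hg : 1 ≤ g) [NeZero (2 * g)]
    (x x' : Fin (2 * g) → Vec (2 * g)) (c c' : ℤ)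
    (halc : IsExtendedAlcove (2 * g) x)
    (hperm : IsMuPermissible (2 * g) g x)
    (hdual : IsSympDual (2 * g) x c)
    (halc' : IsExtendedAlcove (2 * g) x')
    (hperm' : IsMuPermissible (2 * g) g x')
    (hdual' : IsSympDual (2 * g) x' c')
    (h : ∀ i j : ℕ, g ≤ i → i ≤ 2 * g → j < 2 * g →
      (i : ZMod (2 * g)) ≠ (j : ZMod (2 * g)) →
      rInv (2 * g) x (i : ZMod (2 * g)) (j : ZMod (2 * g)) =
        rInv (2 * g) x' (i : ZMod (2 * g)) (j : ZMod (2 * g))) :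
    x = x' :=
  sympAlcove_determined_by_partial_invariants_general g x x' c c' hperm hdual hperm' hdual' h
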